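/- arXiv:1610.05836 — 3 statements merged into one kernel-verified Lean document; each statement's English description precedes it below -/
import Mathlib

section
/- Let Ω ⊂ ℝⁿ be a bounded Lipschitz (or smooth) domain and D ⋐ Ω a subdomain with Ω \ D̄ connected. Suppose ξ ∈ C²(Ω \ D̄) ∩ C¹(closure) satisfies Δξ = g·f in Ω \ D̄ where f is real-valued and nonnegative, g is harmonic in Ω \ D̄ with g = 0 on ∂D, and ξ = 0 on ∂D, ξ = ∂ξ/∂ν = 0 on ∂Ω. If additionally f > 0 on Ω \ D̄ except on a set of measure zero, then g ≡ 0 in Ω \ D̄. -/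
open MeasureTheory Complex

/- Pair Green's second identity with ξ and ḡ on Ω \ D̄: the boundary terms vanish by the
boundary conditions, and since Δg = 0 and Δξ = g f the volume integrand is f |g|². Hence
∫ f |g|² = 0, so g = 0 wherever f > 0, i.e. almost everywhere, and by continuity everywhere
on the open set Ω \ D̄. -/

/-- Laplacian via second directional derivatives along coordinate directions. -/
noncomputable def lap {n : ℕ} (u : EuclideanSpace ℝ (Fin n) → ℂ)
    (x : EuclideanSpace ℝ (Fin n)) : ℂ :=
  ∑ i : Fin n, deriv (deriv (fun t : ℝ => u (x + t • EuclideanSpace.single i (1 : ℝ)))) 0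

/-- Directional (normal) derivative of u at x in the direction ν x. -/
noncomputable def dnu {n : ℕ} (ν : EuclideanSpace ℝ (Fin n) → EuclideanSpace ℝ (Fin n))
    (u : EuclideanSpace ℝ (Fin n) → ℂ) (x : EuclideanSpace ℝ (Fin n)) : ℂ :=
  deriv (fun t : ℝ => u (x + t • ν x)) 0

theorem ae_eq_zero_of_integral_mul_norm_sq_eq_zero {α E : Type*} [MeasurableSpace α]
    [NormedAddCommGroup E] {μ : Measure α} {f : α → ℝ} {g : α → E}
    (hf : ∀ᵐ x ∂μ, 0 < f x) (hint : Integrable (fun x => f x * ‖g x‖ ^ 2) μ)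
    (h : ∫ x, f x * ‖g x‖ ^ 2 ∂μ = 0) : g =ᵐ[μ] 0 := by
  have hnonneg : 0 ≤ᵐ[μ] fun x => f x * ‖g x‖ ^ 2 := by
    filter_upwards [hf] with x hx
    positivity
  filter_upwards [(integral_eq_zero_iff_of_nonneg_ae hnonneg hint).mp h, hf] with x hx hfx
  simpa [hfx.ne'] using hx

theorem mul_ofReal_mul_conj (z : ℂ) (r : ℝ) : z * r * (starRingEnd ℂ) z = (r * ‖z‖ ^ 2 : ℝ) := by
  rw [mul_right_comm, mul_conj, normSq_eq_norm_sq]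
  push_cast
  ring

theorem stmt_3_general {n : ℕ} (Ω D : Set (EuclideanSpace ℝ (Fin n)))
    (hΩo : IsOpen Ω)
    (ξ g : EuclideanSpace ℝ (Fin n) → ℂ) (f : EuclideanSpace ℝ (Fin n) → ℝ)
    (νΩ νD : EuclideanSpace ℝ (Fin n) → EuclideanSpace ℝ (Fin n))
    (σΩ σD : Measure (EuclideanSpace ℝ (Fin n)))
    (hσΩ : ∀ᵐ x ∂σΩ, x ∈ frontier Ω) (hσD : ∀ᵐ x ∂σD, x ∈ frontier D)
    -- the PDE Δξ = g·f in Ω \ D̄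
    (hΔξ : ∀ x ∈ Ω \ closure D, lap ξ x = g x * (f x : ℂ))
    -- g harmonic in Ω \ D̄, continuous there, vanishing on ∂D
    (hgharm : ∀ x ∈ Ω \ closure D, lap g x = 0)
    (hgcont : ContinuousOn g (Ω \ closure D))
    (hgD : ∀ x ∈ frontier D, g x = 0)
    -- boundary conditions for ξ
    (hξD : ∀ x ∈ frontier D, ξ x = 0)
    (hξΩ : ∀ x ∈ frontier Ω, ξ x = 0)
    (hξνΩ : ∀ x ∈ frontier Ω, dnu νΩ ξ x = 0)
    -- f is real-valued, nonnegative, and positive a.e.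
    (hfpos : ∀ᵐ x ∂(volume.restrict (Ω \ closure D)), 0 < f x)
    (hint : IntegrableOn (fun x => f x * ‖g x‖ ^ 2) (Ω \ closure D) volume)
    -- Green's second identity on Ω \ D̄ for the pair (ξ, ḡ)
    (hGreen : ∫ x in Ω \ closure D,
          (lap ξ x * (starRingEnd ℂ) (g x) - ξ x * (starRingEnd ℂ) (lap g x)) ∂volume
        = (∫ x, (dnu νΩ ξ x * (starRingEnd ℂ) (g x)
              - ξ x * (starRingEnd ℂ) (dnu νΩ g x)) ∂σΩ)
          - ∫ x, (dnu νD ξ x * (starRingEnd ℂ) (g x)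
              - ξ x * (starRingEnd ℂ) (dnu νD g x)) ∂σD) :
    ∀ x ∈ Ω \ closure D, g x = 0 := by
  have hS : IsOpen (Ω \ closure D) := hΩo.sdiff isClosed_closure
  have hbdryΩ : ∫ x, (dnu νΩ ξ x * (starRingEnd ℂ) (g x)
      - ξ x * (starRingEnd ℂ) (dnu νΩ g x)) ∂σΩ = 0 := by
    refine integral_eq_zero_of_ae ?_
    filter_upwards [hσΩ] with y hy
    simp [hξνΩ y hy, hξΩ y hy]
  have hbdryD : ∫ x, (dnu νD ξ x * (starRingEnd ℂ) (g x)
      - ξ x * (starRingEnd ℂ) (dnu νD g x)) ∂σD = 0 := by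
    refine integral_eq_zero_of_ae ?_
    filter_upwards [hσD] with y hy
    simp [hgD y hy, hξD y hy]
  have hvol : ∫ x in Ω \ closure D, f x * ‖g x‖ ^ 2 = 0 := by
    rw [hbdryΩ, hbdryD, sub_zero] at hGreen
    rw [← ofReal_eq_zero, ← integral_complex_ofReal, ← hGreen]
    refine setIntegral_congr_fun hS.measurableSet fun y hy => ?_
    simp only [hΔξ y hy, hgharm y hy, map_zero, mul_zero, sub_zero, mul_ofReal_mul_conj]
  have hae : g =ᵐ[volume.restrict (Ω \ closure D)] 0 :=
    ae_eq_zero_of_integral_mul_norm_sq_eq_zero hfpos hint hvol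
  exact fun x hx => Measure.eqOn_open_of_ae_eq hae hS hgcont continuousOn_const hx

/-- If Δξ = f·g in Ω \ D̄ with f ≥ 0 and f > 0 a.e., g harmonic with g = 0 on ∂D,
ξ = 0 on ∂D and ξ = ∂ξ/∂ν = 0 on ∂Ω, then g ≡ 0 in Ω \ D̄ (Green's second identity
on Ω \ D̄ being available as a hypothesis). -/
theorem stmt_3 {n : ℕ} (Ω D : Set (EuclideanSpace ℝ (Fin n)))
    (hΩo : IsOpen Ω) (hΩb : Bornology.IsBounded Ω) (hDo : IsOpen D)
    (hDΩ : closure D ⊆ Ω) (hconn : IsConnected (Ω \ closure D))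
    (ξ g : EuclideanSpace ℝ (Fin n) → ℂ) (f : EuclideanSpace ℝ (Fin n) → ℝ)
    (νΩ νD : EuclideanSpace ℝ (Fin n) → EuclideanSpace ℝ (Fin n))
    (σΩ σD : Measure (EuclideanSpace ℝ (Fin n)))
    (hσΩ : ∀ᵐ x ∂σΩ, x ∈ frontier Ω) (hσD : ∀ᵐ x ∂σD, x ∈ frontier D)
    -- the PDE Δξ = g·f in Ω \ D̄
    (hΔξ : ∀ x ∈ Ω \ closure D, lap ξ x = g x * (f x : ℂ))
    -- g harmonic in Ω \ D̄, continuous there, vanishing on ∂D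
    (hgharm : ∀ x ∈ Ω \ closure D, lap g x = 0)
    (hgcont : ContinuousOn g (Ω \ closure D))
    (hgD : ∀ x ∈ frontier D, g x = 0)
    -- boundary conditions for ξ
    (hξD : ∀ x ∈ frontier D, ξ x = 0)
    (hξΩ : ∀ x ∈ frontier Ω, ξ x = 0)
    (hξνΩ : ∀ x ∈ frontier Ω, dnu νΩ ξ x = 0)
    -- f is real-valued, nonnegative, and positive a.e.
    (hf0 : ∀ x ∈ Ω \ closure D, 0 ≤ f x)
    (hfpos : ∀ᵐ x ∂(volume.restrict (Ω \ closure D)), 0 < f x)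
    (hint : IntegrableOn (fun x => f x * ‖g x‖ ^ 2) (Ω \ closure D) volume)
    -- Green's second identity on Ω \ D̄ for the pair (ξ, ḡ)
    (hGreen : ∫ x in Ω \ closure D,
          (lap ξ x * (starRingEnd ℂ) (g x) - ξ x * (starRingEnd ℂ) (lap g x)) ∂volume
        = (∫ x, (dnu νΩ ξ x * (starRingEnd ℂ) (g x)
              - ξ x * (starRingEnd ℂ) (dnu νΩ g x)) ∂σΩ)
          - ∫ x, (dnu νD ξ x * (starRingEnd ℂ) (g x)
              - ξ x * (starRingEnd ℂ) (dnu νD g x)) ∂σD) :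
    ∀ x ∈ Ω \ closure D, g x = 0 :=
  stmt_3_general Ω D hΩo ξ g f νΩ νD σΩ σD hσΩ hσD hΔξ hgharm hgcont hgD hξD hξΩ hξνΩ hfpos hint
    hGreen
end

section
/- Let Ω ⊂ ℝⁿ be a bounded smooth domain and D ⋐ Ω with Ω \ D̄ connected. Suppose ζ ∈ C²(Ω \ D̄) ∩ C¹(closure) satisfies Δζ = p in Ω \ D̄, where p is harmonic in Ω \ D̄ with ∂p/∂ν = 0 on ∂D, and ζ satisfies ∂ζ/∂ν = 0 on ∂D and ζ = ∂ζ/∂ν = 0 on ∂Ω. Then p ≡ 0 in Ω \ D̄. -/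
open MeasureTheory Complex

/-- If Δζ = p in Ω \ D̄, p harmonic with ∂p/∂ν = 0 on ∂D, and ∂ζ/∂ν = 0 on ∂D,
ζ = ∂ζ/∂ν = 0 on ∂Ω, then p ≡ 0 in Ω \ D̄ (Green's second identity on Ω \ D̄
being available as a hypothesis). -/
theorem stmt_4 {n : ℕ} (Ω D : Set (EuclideanSpace ℝ (Fin n)))
    (hΩo : IsOpen Ω) (hΩb : Bornology.IsBounded Ω) (hDo : IsOpen D)
    (hDΩ : closure D ⊆ Ω) (hconn : IsConnected (Ω \ closure D))
    (ζ p : EuclideanSpace ℝ (Fin n) → ℂ)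
    (νΩ νD : EuclideanSpace ℝ (Fin n) → EuclideanSpace ℝ (Fin n))
    (σΩ σD : Measure (EuclideanSpace ℝ (Fin n)))
    (hσΩ : ∀ᵐ x ∂σΩ, x ∈ frontier Ω) (hσD : ∀ᵐ x ∂σD, x ∈ frontier D)
    -- the PDE Δζ = p in Ω \ D̄
    (hΔζ : ∀ x ∈ Ω \ closure D, lap ζ x = p x)
    -- p harmonic in Ω \ D̄, continuous there, with ∂p/∂ν = 0 on ∂D
    (hpharm : ∀ x ∈ Ω \ closure D, lap p x = 0)
    (hpcont : ContinuousOn p (Ω \ closure D))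
    (hpD : ∀ x ∈ frontier D, dnu νD p x = 0)
    -- boundary conditions for ζ
    (hζD : ∀ x ∈ frontier D, dnu νD ζ x = 0)
    (hζΩ : ∀ x ∈ frontier Ω, ζ x = 0)
    (hζνΩ : ∀ x ∈ frontier Ω, dnu νΩ ζ x = 0)
    (hint : IntegrableOn (fun x => ‖p x‖ ^ 2) (Ω \ closure D) volume)
    -- Green's second identity on Ω \ D̄ for the pair (ζ, p̄)
    (hGreen : ∫ x in Ω \ closure D,
          (lap ζ x * (starRingEnd ℂ) (p x) - ζ x * (starRingEnd ℂ) (lap p x)) ∂volume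
        = (∫ x, (dnu νΩ ζ x * (starRingEnd ℂ) (p x)
              - ζ x * (starRingEnd ℂ) (dnu νΩ p x)) ∂σΩ)
          - ∫ x, (dnu νD ζ x * (starRingEnd ℂ) (p x)
              - ζ x * (starRingEnd ℂ) (dnu νD p x)) ∂σD) :
    ∀ x ∈ Ω \ closure D, p x = 0 := by

  intro x₀ hx₀
  set S := Ω \ closure D with hS
  have hSo : IsOpen S := hΩo.sdiff isClosed_closure
  have hSm : MeasurableSet S := hSo.measurableSet
  -- boundary integrals vanish
  have h1 : (∫ x, (dnu νΩ ζ x * (starRingEnd ℂ) (p x)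
      - ζ x * (starRingEnd ℂ) (dnu νΩ p x)) ∂σΩ) = 0 := by
    apply integral_eq_zero_of_ae
    filter_upwards [hσΩ] with x hx
    simp [hζνΩ x hx, hζΩ x hx]
  have h2 : (∫ x, (dnu νD ζ x * (starRingEnd ℂ) (p x)
      - ζ x * (starRingEnd ℂ) (dnu νD p x)) ∂σD) = 0 := by
    apply integral_eq_zero_of_ae
    filter_upwards [hσD] with x hx
    simp [hζD x hx, hpD x hx]
  -- LHS equals the integral of ‖p‖²
  have hL : (∫ x in S,
      (lap ζ x * (starRingEnd ℂ) (p x) - ζ x * (starRingEnd ℂ) (lap p x)) ∂volume)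
      = ∫ x in S, ((‖p x‖ ^ 2 : ℝ) : ℂ) ∂volume := by
    apply setIntegral_congr_fun hSm
    intro x hx
    simp only []
    rw [hΔζ x hx, hpharm x hx]
    simp [Complex.mul_conj']
  have hzero : (∫ x in S, ((‖p x‖ ^ 2 : ℝ) : ℂ) ∂volume) = 0 := by
    rw [← hL, hGreen, h1, h2, sub_zero]
  have hzeroR : (∫ x in S, ‖p x‖ ^ 2 ∂volume) = 0 := by
    have := integral_ofReal (𝕜 := ℂ) (f := fun x => ‖p x‖ ^ 2)
      (μ := volume.restrict S)
    exact Complex.ofReal_eq_zero.mp (this.symm.trans hzero)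
  have hae : (fun x => ‖p x‖ ^ 2) =ᵐ[volume.restrict S] 0 := by
    rw [← MeasureTheory.setIntegral_eq_zero_iff_of_nonneg_ae ?_ hint]
    · exact hzeroR
    · filter_upwards with x
      positivity
  -- upgrade a.e. to pointwise using continuity
  by_contra hpx
  have hT : IsOpen (S ∩ p ⁻¹' {0}ᶜ) :=
    hpcont.isOpen_inter_preimage hSo isOpen_compl_singleton
  have hTx : x₀ ∈ S ∩ p ⁻¹' {0}ᶜ := ⟨hx₀, hpx⟩
  have hpos : 0 < volume (S ∩ p ⁻¹' {0}ᶜ) := hT.measure_pos volume ⟨x₀, hTx⟩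
  have hae' : ∀ᵐ x ∂volume, x ∈ S → ‖p x‖ ^ 2 = 0 :=
    (ae_restrict_iff' hSm).mp hae
  have hsub : S ∩ p ⁻¹' {0}ᶜ ⊆ {x | ¬ (x ∈ S → ‖p x‖ ^ 2 = 0)} := by
    intro x ⟨hxS, hxp⟩
    simp only [Set.mem_setOf_eq, Classical.not_imp]
    refine ⟨hxS, ?_⟩
    simp only [Set.mem_preimage, Set.mem_compl_iff, Set.mem_singleton_iff] at hxp
    exact pow_ne_zero 2 (norm_ne_zero_iff.mpr hxp)
  have : volume (S ∩ p ⁻¹' {0}ᶜ) = 0 :=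
    measure_mono_null hsub hae'
  exact absurd this hpos.ne'
end

section
/- Let ψ : ∂D → ℂ be continuous on the boundary of a bounded Lipschitz domain D ⊂ ℝⁿ, and suppose v ∈ C²(D) ∩ C¹(D̄) satisfies Δv + k²v = 0 in D, v = −ψ and ∂v/∂ν = −iψ on ∂D (with k > 0 real). Then i∫_{∂D}|ψ|² ds = ∫_D (|∇v|² − k²|v|²) dx, and consequently ψ ≡ 0 on ∂D. -/
open MeasureTheory Complex

/-! Green's first identity for `v̄, v` reads `∫_{∂D} v̄ ∂_ν v = ∫_D (|∇v|² + v̄ Δv)`.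
The boundary conditions turn the left side into `i ∫_{∂D} |ψ|²`, and the Helmholtz equation
turns the right side into the real number `∫_D (|∇v|² − k²|v|²)`. Comparing imaginary parts
gives `∫_{∂D} |ψ|² = 0`, so `ψ = 0` almost everywhere on `∂D`; as `ψ` is continuous and the
surface measure charges every relatively open piece of `∂D`, `ψ` vanishes identically. -/

open scoped ComplexConjugate

theorem conj_mul_of_eq_neg_of_eq_neg_I_mul {a b z : ℂ} (ha : a = -z) (hb : b = -I * z) :
    conj a * b = I * ((‖z‖ ^ 2 : ℝ) : ℂ) := by
  rw [ha, hb, map_neg]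
  push_cast
  linear_combination I * conj_mul' z

theorem integral_conj_mul_of_ae_eq {X : Type*} [MeasurableSpace X] {μ : Measure X}
    {f g ψ : X → ℂ} (hf : ∀ᵐ x ∂μ, f x = -ψ x) (hg : ∀ᵐ x ∂μ, g x = -I * ψ x) :
    ∫ x, conj (f x) * g x ∂μ = I * ((∫ x, ‖ψ x‖ ^ 2 ∂μ : ℝ) : ℂ) := by
  calc ∫ x, conj (f x) * g x ∂μ = ∫ x, I * ((‖ψ x‖ ^ 2 : ℝ) : ℂ) ∂μ := by
        refine integral_congr_ae ?_
        filter_upwards [hf, hg] with x hfx hgx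
        exact conj_mul_of_eq_neg_of_eq_neg_I_mul hfx hgx
    _ = I * ((∫ x, ‖ψ x‖ ^ 2 ∂μ : ℝ) : ℂ) := by rw [integral_const_mul, integral_complex_ofReal]

theorem add_conj_mul_of_add_sq_mul_eq_zero {r k : ℝ} {v w : ℂ} (h : w + (k : ℂ) ^ 2 * v = 0) :
    ((r : ℂ) + conj v * w) = ((r - k ^ 2 * ‖v‖ ^ 2 : ℝ) : ℂ) := by
  rw [eq_neg_of_add_eq_zero_left h]
  push_cast
  linear_combination (-(k : ℂ) ^ 2) * conj_mul' v

theorem ae_eq_zero_of_integral_norm_sq_eq_zero {X E : Type*} [MeasurableSpace X]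
    [NormedAddCommGroup E] {μ : Measure X} {ψ : X → E}
    (hint : Integrable (fun x => ‖ψ x‖ ^ 2) μ) (h : ∫ x, ‖ψ x‖ ^ 2 ∂μ = 0) :
    ∀ᵐ x ∂μ, ψ x = 0 := by
  filter_upwards [(integral_eq_zero_iff_of_nonneg (fun x => by positivity) hint).mp h]
    with x hx
  exact norm_eq_zero.mp (pow_eq_zero_iff two_ne_zero |>.mp hx)

/-- The zero set of a function continuous on `S` is relatively closed in `S`, so its
complement in `S` is a relatively open set of measure zero, hence empty. -/
theorem ContinuousOn.eq_zero_of_ae_eq_zero {X E : Type*} [TopologicalSpace X]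
    [MeasurableSpace X] [NormedAddCommGroup E] {μ : Measure X} {S : Set X} {ψ : X → E}
    (hψ : ContinuousOn ψ S)
    (hμ : ∀ s : Set X, IsOpen s → (s ∩ S).Nonempty → 0 < μ (s ∩ S))
    (h : ∀ᵐ x ∂μ, ψ x = 0) : ∀ x ∈ S, ψ x = 0 := by
  obtain ⟨u, hu, hue⟩ := continuousOn_iff'.mp hψ {0}ᶜ isOpen_compl_singleton
  have hnull : μ (u ∩ S) = 0 := by
    rw [← hue]
    exact measure_mono_null Set.inter_subset_left (ae_iff.mp h)
  intro x hx
  by_contra hne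
  exact (hμ u hu ⟨x, hue ▸ ⟨hne, hx⟩⟩).ne' hnull

theorem stmt_13_general {n : ℕ} (D : Set (EuclideanSpace ℝ (Fin n)))
    (hDo : IsOpen D)
    (ψ v : EuclideanSpace ℝ (Fin n) → ℂ) (k : ℝ)
    (hψc : ContinuousOn ψ (frontier D))
    (hPDE : ∀ x ∈ D, lap v x + (k : ℂ) ^ 2 * v x = 0)
    (ν : EuclideanSpace ℝ (Fin n) → EuclideanSpace ℝ (Fin n))
    (σ : Measure (EuclideanSpace ℝ (Fin n))) (hσ : ∀ᵐ x ∂σ, x ∈ frontier D)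
    -- σ charges every nonempty relatively open piece of ∂D
    (hσpos : ∀ s : Set (EuclideanSpace ℝ (Fin n)), IsOpen s →
      (s ∩ frontier D).Nonempty → 0 < σ (s ∩ frontier D))
    (hbc1 : ∀ x ∈ frontier D, v x = -ψ x)
    (hbc2 : ∀ x ∈ frontier D, dnu ν v x = -Complex.I * ψ x)
    (hintψ : Integrable (fun x => ‖ψ x‖ ^ 2) σ)
    -- Green's first identity on D for the pair (v̄, v)
    (hGreen : ∫ x, (starRingEnd ℂ) (v x) * dnu ν v x ∂σ
        = ∫ x in D, (((‖fderiv ℝ v x‖ ^ 2 : ℝ) : ℂ)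
            + (starRingEnd ℂ) (v x) * lap v x) ∂volume) :
    Complex.I * ((∫ x, ‖ψ x‖ ^ 2 ∂σ : ℝ) : ℂ)
        = ((∫ x in D, (‖fderiv ℝ v x‖ ^ 2 - k ^ 2 * ‖v x‖ ^ 2) ∂volume : ℝ) : ℂ)
      ∧ ∀ x ∈ frontier D, ψ x = 0 := by
  have hboundary := integral_conj_mul_of_ae_eq (hσ.mono hbc1) (hσ.mono hbc2)
  have hinterior : ∫ x in D, (((‖fderiv ℝ v x‖ ^ 2 : ℝ) : ℂ) + conj (v x) * lap v x)
      = ((∫ x in D, (‖fderiv ℝ v x‖ ^ 2 - k ^ 2 * ‖v x‖ ^ 2) : ℝ) : ℂ) := by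
    rw [← integral_complex_ofReal]
    exact setIntegral_congr_fun hDo.measurableSet
      fun x hx => add_conj_mul_of_add_sq_mul_eq_zero (hPDE x hx)
  have hEq := hboundary.symm.trans (hGreen.trans hinterior)
  have hnorm : ∫ x, ‖ψ x‖ ^ 2 ∂σ = 0 := by simpa using congrArg Complex.im hEq
  exact ⟨hEq, hψc.eq_zero_of_ae_eq_zero hσpos
    (ae_eq_zero_of_integral_norm_sq_eq_zero hintψ hnorm)⟩

/-- If Δv + k²v = 0 in D with v = −ψ, ∂v/∂ν = −iψ on ∂D, then (via Green's first
identity) i∫_{∂D}|ψ|² ds = ∫_D (|∇v|² − k²|v|²) dx and consequently ψ ≡ 0 on ∂D. -/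
theorem stmt_13 {n : ℕ} (D : Set (EuclideanSpace ℝ (Fin n)))
    (hDo : IsOpen D) (hDb : Bornology.IsBounded D)
    (ψ v : EuclideanSpace ℝ (Fin n) → ℂ) (k : ℝ) (hk : 0 < k)
    (hψc : ContinuousOn ψ (frontier D))
    (hv1 : ContDiffOn ℝ 1 v (closure D))
    (hPDE : ∀ x ∈ D, lap v x + (k : ℂ) ^ 2 * v x = 0)
    (ν : EuclideanSpace ℝ (Fin n) → EuclideanSpace ℝ (Fin n))
    (σ : Measure (EuclideanSpace ℝ (Fin n))) (hσ : ∀ᵐ x ∂σ, x ∈ frontier D)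
    -- σ charges every nonempty relatively open piece of ∂D
    (hσpos : ∀ s : Set (EuclideanSpace ℝ (Fin n)), IsOpen s →
      (s ∩ frontier D).Nonempty → 0 < σ (s ∩ frontier D))
    (hbc1 : ∀ x ∈ frontier D, v x = -ψ x)
    (hbc2 : ∀ x ∈ frontier D, dnu ν v x = -Complex.I * ψ x)
    (hintψ : Integrable (fun x => ‖ψ x‖ ^ 2) σ)
    (hintv : IntegrableOn (fun x => ‖fderiv ℝ v x‖ ^ 2 - k ^ 2 * ‖v x‖ ^ 2) D volume)
    -- Green's first identity on D for the pair (v̄, v)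
    (hGreen : ∫ x, (starRingEnd ℂ) (v x) * dnu ν v x ∂σ
        = ∫ x in D, (((‖fderiv ℝ v x‖ ^ 2 : ℝ) : ℂ)
            + (starRingEnd ℂ) (v x) * lap v x) ∂volume) :
    Complex.I * ((∫ x, ‖ψ x‖ ^ 2 ∂σ : ℝ) : ℂ)
        = ((∫ x in D, (‖fderiv ℝ v x‖ ^ 2 - k ^ 2 * ‖v x‖ ^ 2) ∂volume : ℝ) : ℂ)
      ∧ ∀ x ∈ frontier D, ψ x = 0 :=
  stmt_13_general D hDo ψ v k hψc hPDE ν σ hσ hσpos hbc1 hbc2 hintψ hGreen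
end
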